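/- arXiv:1709.04994 — 3 statements merged into one kernel-verified Lean document; each statement's English description precedes it below -/
import Mathlib

section
/- For λ in the upper half-plane, the function u defined by u(x) = e^{i√λ x} for x ≥ 0 and u(x) = ᾱ e^{√λ x} + α e^{-√λ x} for x < 0, where α = (1 - i)/2, is continuously differentiable on ℝ and satisfies -u''(x) = λ·sgn(x)·u(x) for all x ≠ 0. -/
/-! A piece of `u` is `x ↦ A e^{cx} + B e^{-cx}`; differentiation maps it to the piece with
coefficients `(c A, -c B)`, so the second derivative is `c²` times the piece. The right piece
(`A = 1`, `B = 0`, `c = i√λ`) and the left piece (`A = ᾱ`, `B = α`, `c = √λ`) both equal `1`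
and have derivative `i√λ` at `0` because `ᾱ + α = 1` and `ᾱ - α = i`; so gluing them gives a
`C¹` function, and away from `0` the equation follows from `(i√λ)² = -λ`, `(√λ)² = λ`. -/

open Complex

noncomputable def sqC (l : ℂ) : ℂ := l ^ (1/2 : ℂ)

noncomputable def alphaC : ℂ := (1 - Complex.I) / 2

section Gluing

variable {E : Type*} [NormedAddCommGroup E] [NormedSpace ℝ E]

theorem hasDerivAt_of_eq_on_Iio_Ici {u f g f' g' : ℝ → E} {a : ℝ}
    (hf : ∀ x, HasDerivAt f (f' x) x) (hg : ∀ x, HasDerivAt g (g' x) x)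
    (hu_lt : ∀ x < a, u x = f x) (hu_ge : ∀ x, a ≤ x → u x = g x)
    (hval : f a = g a) (hder : f' a = g' a) (x : ℝ) :
    HasDerivAt u (if x ≤ a then f' x else g' x) x := by
  have hu_le : ∀ y ≤ a, u y = f y := fun y hy =>
    hy.lt_or_eq.elim (hu_lt y) fun hya => by rw [hya, hu_ge a le_rfl, hval]
  rcases lt_trichotomy x a with hxa | rfl | hxa
  · rw [if_pos hxa.le]
    exact (hf x).congr_of_eventuallyEq <|
      Filter.eventually_of_mem (Iio_mem_nhds hxa) hu_lt
  · have hleft : HasDerivWithinAt u (f' x) (Set.Iic x) x :=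
      (hf x).hasDerivWithinAt.congr (fun y hy => hu_le y hy) (hu_le x le_rfl)
    have hright : HasDerivWithinAt u (f' x) (Set.Ici x) x := by
      rw [hder]
      exact (hg x).hasDerivWithinAt.congr (fun y hy => hu_ge y hy) (hu_ge x le_rfl)
    rw [if_pos le_rfl]
    exact (hleft.union hright).hasDerivAt (by simp)
  · rw [if_neg hxa.not_ge]
    exact (hg x).congr_of_eventuallyEq <|
      Filter.eventually_of_mem (Ioi_mem_nhds hxa) fun y hy => hu_ge y hy.le

theorem contDiff_one_of_eq_on_Iio_Ici {u f g f' g' : ℝ → E} {a : ℝ}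
    (hf : ∀ x, HasDerivAt f (f' x) x) (hg : ∀ x, HasDerivAt g (g' x) x)
    (hf' : Continuous f') (hg' : Continuous g')
    (hu_lt : ∀ x < a, u x = f x) (hu_ge : ∀ x, a ≤ x → u x = g x)
    (hval : f a = g a) (hder : f' a = g' a) :
    ContDiff ℝ 1 u := by
  have hu := hasDerivAt_of_eq_on_Iio_Ici hf hg hu_lt hu_ge hval hder
  refine contDiff_one_iff_deriv.2 ⟨fun x => (hu x).differentiableAt, ?_⟩
  rw [show deriv u = _ from funext fun x => (hu x).deriv]
  exact hf'.if_le hg' continuous_id continuous_const fun x hx => hx ▸ hder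

end Gluing

noncomputable def expPair (A B c : ℂ) (x : ℝ) : ℂ :=
  A * exp (c * x) + B * exp (-c * x)

theorem hasDerivAt_cexp_mul_ofReal (c : ℂ) (x : ℝ) :
    HasDerivAt (fun x : ℝ => exp (c * x)) (c * exp (c * x)) x := by
  simpa [mul_comm] using ((hasDerivAt_id (x : ℂ)).const_mul c).cexp.comp_ofReal

theorem hasDerivAt_expPair (A B c : ℂ) (x : ℝ) :
    HasDerivAt (expPair A B c) (expPair (c * A) (-c * B) c x) x := by
  refine (((hasDerivAt_cexp_mul_ofReal c x).const_mul A).add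
    ((hasDerivAt_cexp_mul_ofReal (-c) x).const_mul B)).congr_deriv ?_
  simp only [expPair]
  ring

theorem deriv_expPair (A B c : ℂ) : deriv (expPair A B c) = expPair (c * A) (-c * B) c :=
  funext fun x => (hasDerivAt_expPair A B c x).deriv

theorem deriv_deriv_expPair (A B c : ℂ) (x : ℝ) :
    deriv (deriv (expPair A B c)) x = c ^ 2 * expPair A B c x := by
  rw [deriv_expPair, deriv_expPair]
  simp only [expPair]
  ring

theorem continuous_expPair (A B c : ℂ) : Continuous (expPair A B c) :=
  continuous_iff_continuousAt.2 fun x => (hasDerivAt_expPair A B c x).continuousAt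

theorem sqC_sq (l : ℂ) : sqC l ^ 2 = l := by
  rw [sqC, one_div]
  exact cpow_ofNat_inv_pow l 2

theorem conj_alphaC : (starRingEnd ℂ) alphaC = (1 + I) / 2 := by
  rw [alphaC, map_div₀, map_sub, map_one, conj_I, map_ofNat]
  ring

theorem u_solves_general (l : ℂ) (u : ℝ → ℂ)
    (hu_pos : ∀ x : ℝ, 0 ≤ x → u x = Complex.exp (Complex.I * sqC l * x))
    (hu_neg : ∀ x : ℝ, x < 0 →
      u x = (starRingEnd ℂ) alphaC * Complex.exp (sqC l * x)
        + alphaC * Complex.exp (-(sqC l) * x)) :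
    ContDiff ℝ 1 u ∧
      ∀ x : ℝ, x ≠ 0 → -(deriv (deriv u) x) = l * (Real.sign x : ℂ) * u x := by
  set s := sqC l
  have hu_right : ∀ x : ℝ, 0 ≤ x → u x = expPair 1 0 (I * s) x := fun x hx => by
    simp [expPair, hu_pos x hx]
  have hu_left : ∀ x : ℝ, x < 0 → u x = expPair (starRingEnd ℂ alphaC) alphaC s x := hu_neg
  constructor
  · refine contDiff_one_of_eq_on_Iio_Ici (hasDerivAt_expPair _ _ _) (hasDerivAt_expPair _ _ _)
      (continuous_expPair _ _ _) (continuous_expPair _ _ _) hu_left hu_right ?_ ?_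
    all_goals
      simp only [expPair, conj_alphaC, ofReal_zero, mul_zero, exp_zero]
      simp only [alphaC]
      ring
  · intro x hx
    rcases hx.lt_or_gt with hneg | hpos
    · have hloc : u =ᶠ[nhds x] expPair (starRingEnd ℂ alphaC) alphaC s :=
        Filter.eventually_of_mem (Iio_mem_nhds hneg) hu_left
      rw [hloc.deriv.deriv_eq, deriv_deriv_expPair, hu_left x hneg, Real.sign_of_neg hneg,
        sqC_sq]
      push_cast
      ring
    · have hloc : u =ᶠ[nhds x] expPair 1 0 (I * s) :=
        Filter.eventually_of_mem (Ioi_mem_nhds hpos) fun y hy => hu_right y hy.le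
      rw [hloc.deriv.deriv_eq, deriv_deriv_expPair, hu_right x hpos.le, Real.sign_of_pos hpos,
        mul_pow, sqC_sq, I_sq]
      push_cast
      ring

/-- The function u (u(x) = e^{i√λ x} for x ≥ 0, u(x) = ᾱe^{√λ x} + αe^{-√λ x} for x < 0)
is continuously differentiable on ℝ and satisfies -u'' = λ·sgn·u away from 0. -/
theorem u_solves (l : ℂ) (hl : 0 < l.im) (u : ℝ → ℂ)
    (hu_pos : ∀ x : ℝ, 0 ≤ x → u x = Complex.exp (Complex.I * sqC l * x))
    (hu_neg : ∀ x : ℝ, x < 0 →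
      u x = (starRingEnd ℂ) alphaC * Complex.exp (sqC l * x)
        + alphaC * Complex.exp (-(sqC l) * x)) :
    ContDiff ℝ 1 u ∧
      ∀ x : ℝ, x ≠ 0 → -(deriv (deriv u) x) = l * (Real.sign x : ℂ) * u x :=
  u_solves_general l u hu_pos hu_neg
end

section
/- Let α = (1-i)/2. For λ in the upper half-plane and all x, y ∈ ℝ, the kernel K_λ(x,y) = C_λ(x,y) + D_λ(x,y) satisfies |K_λ(x,y)| ≤ 1/√|λ|, where C_λ and D_λ are the explicit piecewise exponential kernels (C_λ(x,y) = (2α√λ)^{-1} times α e^{i√λ(x+y)} if x,y ≥ 0; -e^{√λ(ix+y)} if x ≥ 0 > y; e^{√λ(x+iy)} if x < 0 ≤ y; -ᾱ e^{√λ(x+y)} if x,y < 0; and D_λ(x,y) = (2α√λ)^{-1} times ᾱ e^{i√λ|x-y|} if x,y ≥ 0; -α e^{-√λ|x-y|} if x,y < 0; 0 otherwise). -/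
/-!
Since `Im λ > 0`, the principal root `√λ` lies in the closed first quadrant, so every exponent
occurring in `2 α √λ K_λ` has nonpositive real part and each exponential has modulus at most `1`.
Hence `|2 α √λ K_λ(x, y)| ≤ |α| + |ᾱ| = √2` on the diagonal quadrants and `≤ 1` on the others,
while `|2 α √λ| = √2 · √|λ|`.
-/

open Complex

/-- The kernel C_λ. -/
noncomputable def Cker (l : ℂ) (x y : ℝ) : ℂ :=
  (1 / (2 * alphaC * sqC l)) *
    (if 0 ≤ x then
      (if 0 ≤ y then alphaC * Complex.exp (Complex.I * sqC l * (x + y))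
       else -Complex.exp (sqC l * (Complex.I * x + y)))
     else
      (if 0 ≤ y then Complex.exp (sqC l * (x + Complex.I * y))
       else -(starRingEnd ℂ) alphaC * Complex.exp (sqC l * (x + y))))

/-- The kernel D_λ. -/
noncomputable def Dker (l : ℂ) (x y : ℝ) : ℂ :=
  (1 / (2 * alphaC * sqC l)) *
    (if 0 ≤ x ∧ 0 ≤ y then
       (starRingEnd ℂ) alphaC * Complex.exp (Complex.I * sqC l * |x - y|)
     else if x < 0 ∧ y < 0 then
       -alphaC * Complex.exp (-(sqC l) * |x - y|)
     else 0)

lemma norm_alphaC : ‖alphaC‖ = Real.sqrt 2 / 2 := by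
  rw [alphaC, norm_div, Complex.norm_two, Complex.norm_def]
  norm_num [Complex.normSq_apply]

lemma norm_sqC (l : ℂ) : ‖sqC l‖ = Real.sqrt ‖l‖ := by
  rw [sqC, Real.sqrt_eq_rpow, ← Complex.norm_cpow_real]
  norm_num

lemma sqC_eq_exp {l : ℂ} (hl : l ≠ 0) : sqC l = exp (log l / 2) := by
  rw [sqC, cpow_def_of_ne_zero hl]
  ring_nf

lemma sqC_re_nonneg (l : ℂ) : 0 ≤ (sqC l).re := by
  rcases eq_or_ne l 0 with rfl | hl
  · simp [sqC]
  rw [sqC_eq_exp hl, exp_re, div_ofNat_im, log_im]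
  refine mul_nonneg (Real.exp_pos _).le (Real.cos_nonneg_of_mem_Icc ⟨?_, ?_⟩) <;>
    linarith [neg_pi_lt_arg l, arg_le_pi l]

lemma sqC_im_nonneg {l : ℂ} (hl : 0 ≤ l.im) : 0 ≤ (sqC l).im := by
  rcases eq_or_ne l 0 with rfl | hl0
  · simp [sqC]
  rw [sqC_eq_exp hl0, exp_im, div_ofNat_im, log_im]
  refine mul_nonneg (Real.exp_pos _).le (Real.sin_nonneg_of_nonneg_of_le_pi ?_ ?_) <;>
    linarith [arg_nonneg_iff.mpr hl, arg_le_pi l, Real.pi_pos]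

/-- `2 α √λ (C_λ + D_λ)`, with `s` in place of `√λ`. -/
noncomputable def scaledKernel (s : ℂ) (x y : ℝ) : ℂ :=
  (if 0 ≤ x then
      (if 0 ≤ y then alphaC * exp (I * s * (x + y)) else -exp (s * (I * x + y)))
    else
      (if 0 ≤ y then exp (s * (x + I * y)) else -(starRingEnd ℂ) alphaC * exp (s * (x + y)))) +
  (if 0 ≤ x ∧ 0 ≤ y then (starRingEnd ℂ) alphaC * exp (I * s * |x - y|)
    else if x < 0 ∧ y < 0 then -alphaC * exp (-s * |x - y|)
    else 0)

lemma Cker_add_Dker (l : ℂ) (x y : ℝ) :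
    Cker l x y + Dker l x y = 1 / (2 * alphaC * sqC l) * scaledKernel (sqC l) x y :=
  (mul_add _ _ _).symm

lemma norm_exp_le_one {z : ℂ} (hz : z.re ≤ 0) : ‖exp z‖ ≤ 1 := by
  rwa [norm_exp, Real.exp_le_one_iff]

lemma norm_mul_exp_le {c z : ℂ} (hz : z.re ≤ 0) : ‖c * exp z‖ ≤ ‖c‖ := by
  rw [norm_mul]
  exact mul_le_of_le_one_right (norm_nonneg c) (norm_exp_le_one hz)

lemma norm_scaledKernel_le {s : ℂ} (hre : 0 ≤ s.re) (him : 0 ≤ s.im) (x y : ℝ) :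
    ‖scaledKernel s x y‖ ≤ Real.sqrt 2 := by
  have one_le_sqrt_two : 1 ≤ Real.sqrt 2 := Real.one_le_sqrt.mpr one_le_two
  have hxy := abs_nonneg (x - y)
  rcases le_or_gt 0 x with hx | hx <;> rcases le_or_gt 0 y with hy | hy
  · simp only [scaledKernel, hx, hy, and_self, ite_true]
    refine (norm_add_le _ _).trans ((add_le_add ?_ ?_).trans_eq (add_halves _)) <;>
      refine (norm_mul_exp_le ?_).trans_eq (by simp [norm_alphaC]) <;> simp <;> nlinarith
  · simp only [scaledKernel, hx, hy.not_ge, hx.not_gt, and_false, false_and, ite_true,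
      ite_false, add_zero, norm_neg]
    exact (norm_exp_le_one (by simp; nlinarith)).trans one_le_sqrt_two
  · simp only [scaledKernel, hy, hx.not_ge, hy.not_gt, and_false, false_and, ite_true,
      ite_false, add_zero]
    exact (norm_exp_le_one (by simp; nlinarith)).trans one_le_sqrt_two
  · simp only [scaledKernel, hx, hy, hx.not_ge, hy.not_ge, and_self, ite_true, ite_false,
      neg_mul]
    refine (norm_add_le _ _).trans ((add_le_add ?_ ?_).trans_eq (add_halves _)) <;>
      rw [norm_neg] <;>
      refine (norm_mul_exp_le ?_).trans_eq (by simp [norm_alphaC]) <;> simp <;> nlinarith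

/-- The kernel K_λ = C_λ + D_λ is bounded by |λ|^{-1/2}. -/
theorem kernel_bound (l : ℂ) (hl : 0 < l.im) (x y : ℝ) :
    ‖Cker l x y + Dker l x y‖ ≤ 1 / Real.sqrt ‖l‖ := by
  have hprefactor : ‖1 / (2 * alphaC * sqC l)‖ = 1 / (Real.sqrt 2 * Real.sqrt ‖l‖) := by
    rw [norm_div, norm_one, norm_mul, norm_mul, Complex.norm_two, norm_alphaC, norm_sqC]
    ring
  calc ‖Cker l x y + Dker l x y‖
      = 1 / (Real.sqrt 2 * Real.sqrt ‖l‖) * ‖scaledKernel (sqC l) x y‖ := by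
        rw [Cker_add_Dker, norm_mul, hprefactor]
    _ ≤ 1 / (Real.sqrt 2 * Real.sqrt ‖l‖) * Real.sqrt 2 := by
        gcongr
        exact norm_scaledKernel_le (sqC_re_nonneg l) (sqC_im_nonneg hl.le) x y
    _ = 1 / Real.sqrt ‖l‖ := by
        field_simp
end

section
/- Suppose f : ℝ → ℂ is in L¹ ∩ L^∞ with f, f' locally absolutely continuous, f satisfies sgn(x)(-f''(x) + q(x)f(x)) = λ f(x) a.e. with q ∈ L¹(ℝ) real and Im λ > 0, and f together with q f and f'' lie in L¹(ℝ). If f ≠ 0 then q f ≠ 0 in L¹(ℝ) and ‖q f‖_{L¹} ≤ |λ|^{-1/2} ‖q‖_{L¹} ‖q f‖_{L¹}; consequently |λ| ≤ ‖q‖_{L¹}². -/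
open MeasureTheory Filter

/-!
Write the eigenvalue equation as `sgn(-f'') - λ f = g` with `g = -sgn · q f`. The resolvent
kernel then represents `f` through `g`, and `‖K‖ ≤ |λ|^{-1/2}`, `|g| ≤ |q f|` give the uniform bound
`‖f‖_∞ ≤ |λ|^{-1/2} ‖q f‖₁`. Multiplying by `|q|` and integrating yields
`‖q f‖₁ ≤ |λ|^{-1/2} ‖q‖₁ ‖q f‖₁`; the uniform bound also shows `‖q f‖₁ ≠ 0` since `f ≠ 0`,
so `|λ|^{1/2} ≤ ‖q‖₁`.
-/

namespace Real

theorem measurable_sign : Measurable Real.sign :=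
  Measurable.ite (measurableSet_lt measurable_id measurable_const) measurable_const
    (Measurable.ite (measurableSet_lt measurable_const measurable_id) measurable_const
      measurable_const)

theorem abs_sign_le_one (r : ℝ) : |Real.sign r| ≤ 1 := by
  rcases Real.sign_apply_eq r with h | h | h <;> simp [h]

end Real

theorem norm_sign_mul_le (r : ℝ) (z : ℂ) : ‖(Real.sign r : ℂ) * z‖ ≤ ‖z‖ := by
  rw [norm_mul, Complex.norm_real, Real.norm_eq_abs]
  exact mul_le_of_le_one_left (norm_nonneg z) (Real.abs_sign_le_one r)

theorem MeasureTheory.Integrable.sign_mul {μ : Measure ℝ} {u : ℝ → ℂ} (hu : Integrable u μ) :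
    Integrable (fun x => (Real.sign x : ℂ) * u x) μ :=
  hu.bdd_mul (c := 1) (Complex.measurable_ofReal.comp Real.measurable_sign).aestronglyMeasurable
    (Eventually.of_forall fun x => by simpa using Real.abs_sign_le_one x)

section

variable {α : Type*} [MeasurableSpace α] {μ : Measure α}

theorem norm_integral_mul_le_of_norm_le {E : Type*} [NormedRing E] [NormedSpace ℝ E]
    {k g : α → E} {m : α → ℝ} {c : ℝ} (hc : 0 ≤ c) (hk : ∀ y, ‖k y‖ ≤ c)
    (hm : Integrable m μ) (hg : ∀ y, ‖g y‖ ≤ m y) :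
    ‖∫ y, k y * g y ∂μ‖ ≤ c * ∫ y, m y ∂μ := by
  rw [← integral_const_mul]
  refine norm_integral_le_of_norm_le (hm.const_mul c) (Eventually.of_forall fun y => ?_)
  exact (norm_mul_le _ _).trans (mul_le_mul (hk y) (hg y) (norm_nonneg _) hc)

theorem integral_norm_ofReal_mul_le {q : α → ℝ} {f : α → ℂ} {B : ℝ} (hq : Integrable q μ)
    (hf : ∀ x, ‖f x‖ ≤ B) :
    ∫ x, ‖(q x : ℂ) * f x‖ ∂μ ≤ (∫ x, |q x| ∂μ) * B := by
  rw [← integral_mul_const]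
  refine integral_mono_of_nonneg (Eventually.of_forall fun x => norm_nonneg _)
    (hq.abs.mul_const B) (Eventually.of_forall fun x => ?_)
  dsimp only
  rw [norm_mul, Complex.norm_real, Real.norm_eq_abs]
  exact mul_le_mul_of_nonneg_left (hf x) (abs_nonneg _)

end

theorem le_sq_of_one_le_inv_sqrt_mul {a Q : ℝ} (ha : 0 ≤ a) (h : 1 ≤ 1 / Real.sqrt a * Q) :
    a ≤ Q ^ 2 := by
  rcases ha.eq_or_lt with rfl | ha
  · positivity
  have hsqrt : Real.sqrt a ≤ Q := by
    rwa [one_div_mul_eq_div, one_le_div (Real.sqrt_pos.mpr ha)] at h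
  calc a = Real.sqrt a ^ 2 := (Real.sq_sqrt ha.le).symm
    _ ≤ Q ^ 2 := pow_le_pow_left₀ (Real.sqrt_nonneg a) hsqrt 2

theorem birman_schwinger_bound_general (q : ℝ → ℝ) (hq : Integrable q)
    (lam : ℂ)
    (K : ℝ → ℝ → ℂ)
    (hKbound : ∀ x y : ℝ, ‖K x y‖ ≤ 1 / Real.sqrt (‖lam‖))
    (hres : ∀ g h : ℝ → ℂ, Integrable g → Integrable h →
      Differentiable ℝ h → Differentiable ℝ (deriv h) →
      Integrable (deriv (deriv h)) →
      (∀ᵐ x : ℝ, (Real.sign x : ℂ) * (-(deriv (deriv h) x)) - lam * h x = g x) →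
      ∀ x : ℝ, h x = ∫ y : ℝ, K x y * g y)
    (f : ℝ → ℂ) (hf_ne : ∃ x, f x ≠ 0)
    (hf_L1 : Integrable f)
    (hf_diff : Differentiable ℝ f) (hf'_diff : Differentiable ℝ (deriv f))
    (hqf_L1 : Integrable (fun x => (q x : ℂ) * f x))
    (hf''_L1 : Integrable (deriv (deriv f)))
    (heig : ∀ᵐ x : ℝ,
      (Real.sign x : ℂ) * (-(deriv (deriv f) x) + (q x : ℂ) * f x) = lam * f x) :
    (∫ x : ℝ, ‖(q x : ℂ) * f x‖) ≠ 0 ∧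
    (∫ x : ℝ, ‖(q x : ℂ) * f x‖) ≤
      (1 / Real.sqrt (‖lam‖)) * (∫ x : ℝ, |q x|) *
        (∫ x : ℝ, ‖(q x : ℂ) * f x‖) ∧
    ‖lam‖ ≤ (∫ x : ℝ, |q x|) ^ 2 := by
  set N := ∫ x : ℝ, ‖(q x : ℂ) * f x‖
  have hrep : ∀ x, f x = ∫ y, K x y * -((Real.sign y : ℂ) * ((q y : ℂ) * f y)) := by
    refine hres _ f hqf_L1.sign_mul.neg hf_L1 hf_diff hf'_diff hf''_L1 ?_
    filter_upwards [heig] with x hx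
    linear_combination hx
  have hf_bound (x : ℝ) : ‖f x‖ ≤ 1 / Real.sqrt ‖lam‖ * N := by
    rw [hrep x]
    exact norm_integral_mul_le_of_norm_le (by positivity) (hKbound x) hqf_L1.norm
      fun y => (norm_neg _).trans_le (norm_sign_mul_le _ _)
  have hN_ne : N ≠ 0 := by
    obtain ⟨x, hx⟩ := hf_ne
    intro hN
    exact hx (norm_le_zero_iff.mp (by simpa [hN] using hf_bound x))
  have hN_le : N ≤ 1 / Real.sqrt ‖lam‖ * (∫ x, |q x|) * N := by
    have := integral_norm_ofReal_mul_le hq hf_bound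
    linarith
  have hN_pos : 0 < N := (integral_nonneg fun x => norm_nonneg _).lt_of_ne' hN_ne
  refine ⟨hN_ne, hN_le, le_sq_of_one_le_inv_sqrt_mul (norm_nonneg lam) ?_⟩
  exact le_of_mul_le_mul_right (by rwa [one_mul]) hN_pos

/-- Birman-Schwinger step: if f is an eigenfunction (lying in L¹ ∩ L^∞, with
qf, f'' ∈ L¹) of sgn(·)(-d²/dx² + q) for λ in the upper half-plane, and the
resolvent of B₀ = sgn(·)(-d²/dx²) at λ is given by an integral kernel K bounded
by |λ|^{-1/2}, then ‖qf‖₁ ≠ 0, ‖qf‖₁ ≤ |λ|^{-1/2}‖q‖₁‖qf‖₁ and |λ| ≤ ‖q‖₁². -/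
theorem birman_schwinger_bound (q : ℝ → ℝ) (hq : Integrable q)
    (lam : ℂ) (hlam : 0 < lam.im)
    (K : ℝ → ℝ → ℂ)
    (hKbound : ∀ x y : ℝ, ‖K x y‖ ≤ 1 / Real.sqrt (‖lam‖))
    (hres : ∀ g h : ℝ → ℂ, Integrable g → Integrable h →
      Differentiable ℝ h → Differentiable ℝ (deriv h) →
      Integrable (deriv (deriv h)) →
      (∀ᵐ x : ℝ, (Real.sign x : ℂ) * (-(deriv (deriv h) x)) - lam * h x = g x) →
      ∀ x : ℝ, h x = ∫ y : ℝ, K x y * g y)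
    (f : ℝ → ℂ) (hf_ne : ∃ x, f x ≠ 0)
    (hf_L1 : Integrable f) (hf_bdd : ∃ M : ℝ, ∀ x, ‖f x‖ ≤ M)
    (hf_diff : Differentiable ℝ f) (hf'_diff : Differentiable ℝ (deriv f))
    (hqf_L1 : Integrable (fun x => (q x : ℂ) * f x))
    (hf''_L1 : Integrable (deriv (deriv f)))
    (heig : ∀ᵐ x : ℝ,
      (Real.sign x : ℂ) * (-(deriv (deriv f) x) + (q x : ℂ) * f x) = lam * f x) :
    (∫ x : ℝ, ‖(q x : ℂ) * f x‖) ≠ 0 ∧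
    (∫ x : ℝ, ‖(q x : ℂ) * f x‖) ≤
      (1 / Real.sqrt (‖lam‖)) * (∫ x : ℝ, |q x|) *
        (∫ x : ℝ, ‖(q x : ℂ) * f x‖) ∧
    ‖lam‖ ≤ (∫ x : ℝ, |q x|) ^ 2 :=
  birman_schwinger_bound_general q hq lam K hKbound hres f hf_ne hf_L1 hf_diff hf'_diff hqf_L1
    hf''_L1 heig
end
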